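/- For F_{2^m}(x) over F_2, the identity F_{2^m}(x) = x^{2^m - 1} holds for all m ≥ 0. -/

import Mathlib

/-!
The addition formula `F (m + n + 1) = F m * F n + F (m + 1) * F (n + 1)` gives the doubling
formula `F (2 n + 2) = F (n + 1) * (X * F (n + 1) + 2 * F n)`, so in characteristic two
`F (2 n) = X * F n ^ 2`. Iterating from `F 1 = 1` yields `F (2 ^ m) = X ^ (2 ^ m - 1)`.
-/

noncomputable def fibPoly (R : Type*) [CommRing R] : ℕ → Polynomial R
  | 0 => 0
  | 1 => 1
  | n + 2 => Polynomial.X * fibPoly R (n + 1) + fibPoly R n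

open Polynomial

section

variable (R : Type*) [CommRing R]

@[simp]
lemma fibPoly_zero : fibPoly R 0 = 0 := rfl

@[simp]
lemma fibPoly_one : fibPoly R 1 = 1 := rfl

lemma fibPoly_add_two (n : ℕ) : fibPoly R (n + 2) = X * fibPoly R (n + 1) + fibPoly R n := rfl

lemma fibPoly_add (m n : ℕ) :
    fibPoly R (m + n + 1) = fibPoly R m * fibPoly R n + fibPoly R (m + 1) * fibPoly R (n + 1) := by
  induction n generalizing m with
  | zero => simp
  | succ n ih =>
    rw [show m + (n + 1) + 1 = (m + 1) + n + 1 by ring, ih, fibPoly_add_two, fibPoly_add_two]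
    ring

lemma fibPoly_two_mul_add_two (n : ℕ) :
    fibPoly R (2 * n + 2) = fibPoly R (n + 1) * (X * fibPoly R (n + 1) + 2 * fibPoly R n) := by
  rw [show 2 * n + 2 = (n + 1) + n + 1 by ring, fibPoly_add, fibPoly_add_two]
  ring

lemma fibPoly_two_mul_of_charP [CharP R 2] (n : ℕ) : fibPoly R (2 * n) = X * fibPoly R n ^ 2 := by
  cases n with
  | zero => simp
  | succ n =>
    rw [mul_add_one, fibPoly_two_mul_add_two, CharTwo.two_eq_zero]
    ring

end

theorem fibPoly_two_pow (m : ℕ) :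
    fibPoly (ZMod 2) (2 ^ m) = Polynomial.X ^ (2 ^ m - 1) := by
  induction m with
  | zero => simp
  | succ m ih =>
    have hexp : (2 ^ m - 1) * 2 + 1 = 2 * 2 ^ m - 1 := by
      have := Nat.one_le_two_pow (n := m)
      omega
    rw [pow_succ', fibPoly_two_mul_of_charP, ih, ← pow_mul, ← pow_succ', hexp]
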